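/- arXiv:2209.10799 — 3 statements merged into one kernel-verified Lean document; each statement's English description precedes it below -/
import Mathlib

section
/- Let (u_1,…,u_q) be an arbitrary q-tuple of monomials in S = K[x_1,…,x_n]. Then the unique sorted q-tuple sort(u_1,…,u_q) (the unique sorted q-tuple with the same product u_1⋯u_q) can be obtained from (u_1,…,u_q) by a finite number of single sorting steps; that is, (u_1,…,u_q) is related to sort(u_1,…,u_q) by the reflexive–transitive closure of the single sorting step relation. -/
/-!
Monomials in `S = K[x_1, …, x_n]` are identified with multisets of (here, natural-number)
indices. -/

/-- Split a list into the sublist of entries in odd positions (1st, 3rd, 5th, …)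
and the sublist of entries in even positions (2nd, 4th, …). -/
def altSplit {α : Type*} : List α → List α × List α
  | [] => ([], [])
  | a :: l => (a :: (altSplit l).2, (altSplit l).1)

/-- The sorting `sort(u,v)` of a pair of monomials: write the product `u*v` as
`x_{i_1} x_{i_2} ⋯ x_{i_t}` with `i_1 ≤ i_2 ≤ ⋯ ≤ i_t`; then `u'` is the product of the
variables in odd positions and `v'` the product of those in even positions. -/
def sortPair {α : Type*} [LinearOrder α] (u v : Multiset α) : Multiset α × Multiset α :=
  (((altSplit ((u + v).sort (· ≤ ·))).1 : List α), ((altSplit ((u + v).sort (· ≤ ·))).2 : List α))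

/-- A pair of monomials is sorted if `sort(u,v) = (u,v)`. -/
def IsSortedPair {α : Type*} [LinearOrder α] (u v : Multiset α) : Prop :=
  sortPair u v = (u, v)

/-- A `q`-tuple of monomials is sorted if `(u_i, u_j)` is a sorted pair for all `i < j`. -/
def IsSortedTuple {α : Type*} [LinearOrder α] {q : ℕ} (u : Fin q → Multiset α) : Prop :=
  ∀ i j : Fin q, i < j → IsSortedPair (u i) (u j)

/-- A `q`-tuple of monomials is sorted of type `(d,r)` if it is sorted, its first `r` entries
have degree `d+1` and the remaining entries have degree `d`. -/
def IsSortedOfType {α : Type*} [LinearOrder α] {q : ℕ} (u : Fin q → Multiset α)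
    (d r : ℕ) : Prop :=
  IsSortedTuple u ∧ ∀ i : Fin q, Multiset.card (u i) = if (i : ℕ) < r then d + 1 else d
/-- A single sorting step on a `q`-tuple: choose `i < j` with `(w_i, w_j)` unsorted and replace
`(w_i, w_j)` by `sort(w_i, w_j)`, leaving the other entries unchanged. -/
def SortStep {α : Type*} [LinearOrder α] {q : ℕ} (w w' : Fin q → Multiset α) : Prop :=
  ∃ i j : Fin q, i < j ∧ ¬ IsSortedPair (w i) (w j) ∧
    w' i = (sortPair (w i) (w j)).1 ∧ w' j = (sortPair (w i) (w j)).2 ∧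
    ∀ k : Fin q, k ≠ i → k ≠ j → w' k = w k

/-!
Write `countLE a m` for the number of entries of `m` that are `≤ a`. Sorting a pair replaces
the counts `(x, y)` of the two monomials by `(⌈(x+y)/2⌉, ⌊(x+y)/2⌋)`, so a pair is sorted exactly
when `y ≤ x ≤ y + 1` at every level `a`. A sorted tuple therefore has, at every level, a
nonincreasing sequence of counts of spread at most one, which is determined by its sum: this
gives uniqueness. For termination, a step never increases the sum of squares of the counts at
any level, and where it keeps it the step turns counts `(x, x + 1)` at positions `i < j` into
`(x + 1, x)`, decreasing `∑ k * count`; a suitably weighted energy thus drops strictly at every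
step.
-/

open Finset

theorem altSplit_perm {α : Type*} (L : List α) : ((altSplit L).1 ++ (altSplit L).2).Perm L := by
  induction L with
  | nil => simp [altSplit]
  | cons x l ih => simpa [altSplit] using (List.perm_append_comm.cons x).trans (ih.cons x)

section CountLE

variable {α : Type*} [LinearOrder α]

def countLE (a : α) (m : Multiset α) : ℕ := Multiset.card (m.filter (· ≤ a))

theorem countLE_add (a : α) (m m' : Multiset α) :
    countLE a (m + m') = countLE a m + countLE a m' := by
  simp [countLE, Multiset.filter_add]

theorem countLE_sum {ι : Type*} (a : α) (s : Finset ι) (f : ι → Multiset α) :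
    countLE a (∑ i ∈ s, f i) = ∑ i ∈ s, countLE a (f i) :=
  map_sum (⟨⟨countLE a, by simp [countLE]⟩, countLE_add a⟩ : Multiset α →+ ℕ) f s

theorem countLE_le_card (a : α) (m : Multiset α) : countLE a m ≤ Multiset.card m :=
  Multiset.card_le_card (Multiset.filter_le _ _)

theorem countLE_cons (a x : α) (m : Multiset α) :
    countLE a (x ::ₘ m) = (if x ≤ a then 1 else 0) + countLE a m := by
  unfold countLE
  split_ifs with h <;> simp [h, add_comm]

theorem countLE_eq_zero_of_lt {a : α} {m : Multiset α} (h : ∀ b ∈ m, a < b) :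
    countLE a m = 0 := by
  simpa [countLE, Multiset.filter_eq_nil] using fun b hb => h b hb

theorem countLE_min_of_forall_le {a N : α} {m : Multiset α} (h : ∀ b ∈ m, b ≤ N) :
    countLE (min a N) m = countLE a m := by
  unfold countLE
  congr 1
  exact Multiset.filter_congr fun b hb => by simp [h b hb]

/-- In a sorted list the entries `≤ a` form a prefix, which the alternating split cuts into
halves. -/
theorem countLE_altSplit {L : List α} (hL : L.Pairwise (· ≤ ·)) (a : α) :
    countLE a (altSplit L).1 = (countLE a L + 1) / 2 ∧
      countLE a (altSplit L).2 = countLE a L / 2 := by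
  induction L with
  | nil => simp [altSplit, countLE]
  | cons x l ih =>
    obtain ⟨hx, hl⟩ := List.pairwise_cons.mp hL
    obtain ⟨h1, h2⟩ := ih hl
    simp only [altSplit, ← Multiset.cons_coe, countLE_cons]
    split_ifs with hxa
    · omega
    · have : countLE a (l : Multiset α) = 0 :=
        countLE_eq_zero_of_lt fun b hb => lt_of_lt_of_le (not_le.mp hxa) (hx b hb)
      omega

theorem sortPair_fst_add_snd (u v : Multiset α) :
    (sortPair u v).1 + (sortPair u v).2 = u + v := by
  simpa [sortPair] using Multiset.coe_eq_coe.mpr (altSplit_perm ((u + v).sort (· ≤ ·)))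

theorem countLE_sortPair (u v : Multiset α) (a : α) :
    countLE a (sortPair u v).1 = (countLE a u + countLE a v + 1) / 2 ∧
      countLE a (sortPair u v).2 = (countLE a u + countLE a v) / 2 := by
  have h := countLE_altSplit (Multiset.pairwise_sort (u + v) (· ≤ ·)) a
  rwa [Multiset.sort_eq, countLE_add] at h

end CountLE

theorem countLE_zero (m : Multiset ℕ) : countLE 0 m = m.count 0 := by
  induction m using Multiset.induction with
  | empty => simp [countLE]
  | cons x m ih => rw [countLE_cons, Multiset.count_cons, ih]; split_ifs <;> omega

theorem countLE_succ (a : ℕ) (m : Multiset ℕ) :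
    countLE (a + 1) m = countLE a m + m.count (a + 1) := by
  induction m using Multiset.induction with
  | empty => simp [countLE]
  | cons x m ih => rw [countLE_cons, countLE_cons, Multiset.count_cons, ih]; split_ifs <;> omega

theorem Multiset.eq_of_forall_countLE_eq {m m' : Multiset ℕ}
    (h : ∀ a, countLE a m = countLE a m') : m = m' := by
  ext b
  cases b with
  | zero => rw [← countLE_zero, ← countLE_zero, h]
  | succ a =>
    have := countLE_succ a m; have := countLE_succ a m'; have := h a; have := h (a + 1)
    omega

theorem isSortedPair_iff_countLE {u v : Multiset ℕ} :
    IsSortedPair u v ↔ ∀ a, countLE a v ≤ countLE a u ∧ countLE a u ≤ countLE a v + 1 := by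
  have h := countLE_sortPair u v
  constructor
  · intro huv a
    have := h a
    rw [show sortPair u v = (u, v) from huv] at this
    dsimp only at this
    exact ⟨by omega, by omega⟩
  · intro hbal
    refine Prod.ext (Multiset.eq_of_forall_countLE_eq fun a => ?_)
      (Multiset.eq_of_forall_countLE_eq fun a => ?_) <;> have := h a <;> have := hbal a <;>
      dsimp only <;> omega

theorem sum_add_pair_comm {ι M : Type*} [Fintype ι] [DecidableEq ι] [AddCommMonoid M]
    {i j : ι} (hij : i ≠ j) {f f' : ι → M} (hoff : ∀ k, k ≠ i → k ≠ j → f' k = f k) :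
    ∑ k, f' k + (f i + f j) = ∑ k, f k + (f' i + f' j) := by
  have split (g : ι → M) : ∑ k, g k = g i + g j + ∑ k ∈ {i, j}ᶜ, g k := by
    rw [← Finset.sum_pair hij, Finset.sum_add_sum_compl]
  have rest : ∑ k ∈ {i, j}ᶜ, f' k = ∑ k ∈ {i, j}ᶜ, f k :=
    Finset.sum_congr rfl fun k hk => by
      simp only [Finset.mem_compl, Finset.mem_insert, Finset.mem_singleton, not_or] at hk
      exact hoff k hk.1 hk.2
  rw [split f, split f', rest]
  abel

theorem sq_add_sq_halves_lt {x y : ℕ} (h : x + 2 ≤ y ∨ y + 2 ≤ x) :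
    ((x + y + 1) / 2) ^ 2 + ((x + y) / 2) ^ 2 < x ^ 2 + y ^ 2 := by
  have hsum : (x + y + 1) / 2 + (x + y) / 2 = x + y := by omega
  have hgap : (x + y) / 2 ≤ (x + y + 1) / 2 ∧ (x + y + 1) / 2 ≤ (x + y) / 2 + 1 := by omega
  rcases h with h | h <;> nlinarith

def pairEnergy (B i j x y : ℕ) : ℕ := B * x ^ 2 + i * x + (B * y ^ 2 + j * y)

theorem pairEnergy_halves_lt {B i j x y : ℕ} (hij : i < j)
    (hB : i * ((x + y + 1) / 2) + j * ((x + y) / 2) < B) (h : ¬(y ≤ x ∧ x ≤ y + 1)) :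
    pairEnergy B i j ((x + y + 1) / 2) ((x + y) / 2) < pairEnergy B i j x y := by
  unfold pairEnergy
  by_cases hswap : y = x + 1
  · subst hswap
    rw [show (x + (x + 1) + 1) / 2 = x + 1 by omega, show (x + (x + 1)) / 2 = x by omega]
    nlinarith
  · have := sq_add_sq_halves_lt (x := x) (y := y) (by omega)
    nlinarith

theorem pairEnergy_halves_le {B i j x y : ℕ} (hij : i < j)
    (hB : i * ((x + y + 1) / 2) + j * ((x + y) / 2) < B) :
    pairEnergy B i j ((x + y + 1) / 2) ((x + y) / 2) ≤ pairEnergy B i j x y := by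
  by_cases h : y ≤ x ∧ x ≤ y + 1
  · rw [show (x + y + 1) / 2 = x by omega, show (x + y) / 2 = y by omega]
  · exact (pairEnergy_halves_lt hij hB h).le

def IsBalanced {ι : Type*} [LinearOrder ι] (b : ι → ℕ) : Prop :=
  ∀ i j, i < j → b j ≤ b i ∧ b i ≤ b j + 1

theorem IsBalanced.le_of_sum_eq {ι : Type*} [Fintype ι] [LinearOrder ι] {b b' : ι → ℕ}
    (hb : IsBalanced b) (hb' : IsBalanced b') (hsum : ∑ k, b k = ∑ k, b' k) (k : ι) :
    b k ≤ b' k := by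
  by_contra! hk
  have hge : ∀ l, b' l ≤ b l := fun l => by
    rcases lt_trichotomy k l with hkl | rfl | hlk
    · have := hb k l hkl; have := hb' k l hkl; omega
    · exact hk.le
    · have := hb l k hlk; have := hb' l k hlk; omega
  exact (Finset.sum_lt_sum (fun l _ => hge l) ⟨k, Finset.mem_univ k, hk⟩).ne' hsum

theorem IsBalanced.eq_of_sum_eq {ι : Type*} [Fintype ι] [LinearOrder ι] {b b' : ι → ℕ}
    (hb : IsBalanced b) (hb' : IsBalanced b') (hsum : ∑ k, b k = ∑ k, b' k) : b = b' :=
  funext fun k => (hb.le_of_sum_eq hb' hsum k).antisymm (hb'.le_of_sum_eq hb hsum.symm k)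

section Tuples

variable {q : ℕ}

theorem isSortedTuple_iff_isBalanced_countLE {w : Fin q → Multiset ℕ} :
    IsSortedTuple w ↔ ∀ a, IsBalanced fun k => countLE a (w k) := by
  simp only [IsSortedTuple, isSortedPair_iff_countLE, IsBalanced]
  exact ⟨fun h a i j hij => h i j hij a, fun h i j hij a => h a i j hij⟩

theorem IsSortedTuple.eq_of_sum_eq {v w : Fin q → Multiset ℕ} (hv : IsSortedTuple v)
    (hw : IsSortedTuple w) (hsum : ∑ k, v k = ∑ k, w k) : v = w := by
  funext k
  refine Multiset.eq_of_forall_countLE_eq fun a => ?_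
  have := (isSortedTuple_iff_isBalanced_countLE.mp hv a).eq_of_sum_eq
    (isSortedTuple_iff_isBalanced_countLE.mp hw a) (by rw [← countLE_sum, ← countLE_sum, hsum])
  exact congrFun this k

theorem SortStep.sum_eq {w w' : Fin q → Multiset ℕ} (h : SortStep w w') :
    ∑ k, w' k = ∑ k, w k := by
  obtain ⟨i, j, hij, -, hi, hj, hoff⟩ := h
  have := sum_add_pair_comm hij.ne hoff
  rwa [hi, hj, sortPair_fst_add_snd, add_left_inj] at this

theorem exists_sortStep_of_not_isSortedTuple {w : Fin q → Multiset ℕ} (h : ¬IsSortedTuple w) :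
    ∃ w', SortStep w w' := by
  simp only [IsSortedTuple, not_forall] at h
  obtain ⟨i, j, hij, hij'⟩ := h
  refine ⟨Function.update (Function.update w i (sortPair (w i) (w j)).1) j
    (sortPair (w i) (w j)).2, i, j, hij, hij', ?_, ?_, fun k hki hkj => ?_⟩ <;>
    simp [Function.update_of_ne, hij.ne, *]

end Tuples

section Energy

variable {q : ℕ}

def levelEnergy (B : ℕ) (c : Fin q → ℕ) : ℕ := ∑ k, (B * c k ^ 2 + k * c k)

theorem levelEnergy_add_pairEnergy (B : ℕ) {i j : Fin q} (hij : i ≠ j) {c c' : Fin q → ℕ}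
    (hoff : ∀ k, k ≠ i → k ≠ j → c' k = c k) :
    levelEnergy B c' + pairEnergy B i j (c i) (c j) =
      levelEnergy B c + pairEnergy B i j (c' i) (c' j) := by
  simpa only [levelEnergy, pairEnergy] using
    sum_add_pair_comm (f := fun k : Fin q => B * c k ^ 2 + k * c k)
      (f' := fun k : Fin q => B * c' k ^ 2 + k * c' k) hij fun k hki hkj => by
        simp only [hoff k hki hkj]

theorem levelEnergy_halves_le {B : ℕ} {i j : Fin q} (hij : i < j) {c c' : Fin q → ℕ}
    (hoff : ∀ k, k ≠ i → k ≠ j → c' k = c k) (hi : c' i = (c i + c j + 1) / 2)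
    (hj : c' j = (c i + c j) / 2) (hB : i * c' i + j * c' j < B) :
    levelEnergy B c' ≤ levelEnergy B c := by
  have := levelEnergy_add_pairEnergy B hij.ne hoff
  have := pairEnergy_halves_le (B := B) hij (hi ▸ hj ▸ hB)
  rw [← hi, ← hj] at this
  omega

theorem levelEnergy_halves_lt {B : ℕ} {i j : Fin q} (hij : i < j) {c c' : Fin q → ℕ}
    (hoff : ∀ k, k ≠ i → k ≠ j → c' k = c k) (hi : c' i = (c i + c j + 1) / 2)
    (hj : c' j = (c i + c j) / 2) (hB : i * c' i + j * c' j < B)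
    (h : ¬(c j ≤ c i ∧ c i ≤ c j + 1)) :
    levelEnergy B c' < levelEnergy B c := by
  have := levelEnergy_add_pairEnergy B hij.ne hoff
  have := pairEnergy_halves_lt (B := B) hij (hi ▸ hj ▸ hB) h
  rw [← hi, ← hj] at this
  omega

/-- The weight `q * card (∑ w) + 1` exceeds every linear term `i * c' i + j * c' j` arising in
a step; levels above the largest index repeat the top level and are left out. -/
def sortEnergy (w : Fin q → Multiset ℕ) : ℕ :=
  ∑ a ∈ range ((∑ k, w k).sup + 1),
    levelEnergy (q * Multiset.card (∑ k, w k) + 1) fun k => countLE a (w k)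

theorem SortStep.sortEnergy_lt {w w' : Fin q → Multiset ℕ} (h : SortStep w w') :
    sortEnergy w' < sortEnergy w := by
  unfold sortEnergy
  rw [h.sum_eq]
  obtain ⟨i, j, hij, hunsorted, hi, hj, hoff⟩ := h
  set s := ∑ k, w k
  have hhalves (a : ℕ) := hi ▸ hj ▸ countLE_sortPair (w i) (w j) a
  have hoff' (a : ℕ) (k : Fin q) (hki : k ≠ i) (hkj : k ≠ j) :
      countLE a (w' k) = countLE a (w k) := by rw [hoff k hki hkj]
  have hB (a : ℕ) : i * countLE a (w' i) + j * countLE a (w' j) < q * Multiset.card s + 1 := by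
    have hpair : w i + w j ≤ s := by
      rw [← Finset.sum_pair hij.ne]; exact Finset.sum_le_sum_of_subset (subset_univ _)
    have hx := (countLE_le_card a _).trans (Multiset.card_le_card hpair)
    rw [countLE_add] at hx
    calc i * countLE a (w' i) + j * countLE a (w' j)
        ≤ q * countLE a (w' i) + q * countLE a (w' j) := by gcongr <;> omega
      _ ≤ q * Multiset.card s := by rw [← mul_add]; gcongr; have := hhalves a; omega
      _ < q * Multiset.card s + 1 := Nat.lt_succ_self _
  obtain ⟨a, ha⟩ : ∃ a, ¬(countLE a (w j) ≤ countLE a (w i) ∧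
      countLE a (w i) ≤ countLE a (w j) + 1) := by
    simpa [isSortedPair_iff_countLE] using hunsorted
  have hbound (k : Fin q) : ∀ b ∈ w k, b ≤ s.sup := fun b hb => Multiset.le_sup
    (Multiset.mem_of_le (Finset.single_le_sum (fun _ _ => zero_le) (mem_univ k)) hb)
  rw [← countLE_min_of_forall_le (hbound i), ← countLE_min_of_forall_le (hbound j)] at ha
  exact Finset.sum_lt_sum
    (fun a _ => levelEnergy_halves_le hij (hoff' a) (hhalves a).1 (hhalves a).2 (hB a))
    ⟨min a s.sup, by simp, levelEnergy_halves_lt hij (hoff' _) (hhalves _).1 (hhalves _).2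
      (hB _) ha⟩

end Energy

theorem exists_isSortedTuple_reflTransGen_sortStep {q : ℕ} (w : Fin q → Multiset ℕ) :
    ∃ z, IsSortedTuple z ∧ Relation.ReflTransGen SortStep w z := by
  induction w using (measure sortEnergy).wf.induction with
  | h w ih =>
    by_cases hw : IsSortedTuple w
    · exact ⟨w, hw, .refl⟩
    · obtain ⟨w', hstep⟩ := exists_sortStep_of_not_isSortedTuple hw
      obtain ⟨z, hz, hw'z⟩ := ih w' hstep.sortEnergy_lt
      exact ⟨z, hz, .head hstep hw'z⟩

theorem Relation.ReflTransGen.sum_eq_of_sortStep {q : ℕ} {w z : Fin q → Multiset ℕ}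
    (h : Relation.ReflTransGen SortStep w z) : ∑ k, z k = ∑ k, w k := by
  induction h with
  | refl => rfl
  | tail _ hstep ih => exact hstep.sum_eq.trans ih

/-- Lemma 1.2: The unique sorted `q`-tuple with the same product as
`(u_1, …, u_q)` can be obtained from `(u_1, …, u_q)` by a finite number of single
sorting steps, i.e. the two tuples are related by the reflexive–transitive closure
of the single sorting step relation. -/
theorem sorted_tuple_reachable (q : ℕ) (u : Fin q → Multiset ℕ) :
    ∃ u' : Fin q → Multiset ℕ,
      IsSortedTuple u' ∧ (∑ i, u' i = ∑ i, u i) ∧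
      (∀ v : Fin q → Multiset ℕ, IsSortedTuple v → (∑ i, v i = ∑ i, u i) → v = u') ∧
      Relation.ReflTransGen SortStep u u' := by
  obtain ⟨u', hsorted, hreach⟩ := exists_isSortedTuple_reflTransGen_sortStep u
  have hsum := hreach.sum_eq_of_sortStep
  exact ⟨u', hsorted, hsum, fun v hv hvu => hv.eq_of_sum_eq hsorted (hvu.trans hsum.symm),
    hreach⟩
end

section
/- Let u = (u_1,…,u_q) be a q-tuple of monomials in S = K[x_1,…,x_n] with deg(u_i) = d+1 for 1 ≤ i ≤ r and deg(u_i) = d for r+1 ≤ i ≤ q (where 0 ≤ r < q). For each i write u_i = x_{s_{i,1}} x_{s_{i,2}} ⋯ x_{s_{i,d_i}} with s_{i,1} ≤ ⋯ ≤ s_{i,d_i}, set k_{i+(j−1)q} = s_{i,j} for all valid i, j, and define g(u) = Σ_{1 ≤ i < j ≤ qd+r} (k_j − k_i). Suppose i < j are indices such that (u_i,u_j) is an unsorted pair, and let u' be the q-tuple obtained from u by replacing (u_i,u_j) by sort(u_i,u_j) (note that sorting preserves the degrees, so u' again has first r entries of degree d+1 and remaining entries of degree d). Then g(u) < g(u').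 -/
/-- The entry `k_{i+(j−1)q} = s_{i,j}` (0-indexed: `k_p = s_{p % q, p / q}`, the `p/q`-th
smallest variable index of the monomial `u_{p % q}`). -/
def entry {q : ℕ} (u : Fin q → Multiset ℕ) (p : ℕ) : ℕ :=
  if h : 0 < q then ((u ⟨p % q, Nat.mod_lt p h⟩).sort (· ≤ ·)).getD (p / q) 0 else 0

/-- The function `g(u) = Σ_{1 ≤ i < j ≤ qd+r} (k_j − k_i)`. -/
def gval (q d r : ℕ) (u : Fin q → Multiset ℕ) : ℤ :=
  ∑ p ∈ Finset.range (q * d + r), ∑ p' ∈ Finset.range (q * d + r),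
    if p < p' then ((entry u p' : ℤ) - (entry u p : ℤ)) else 0

/-!
With `N = qd + r` one has `g(u) = ∑_{p < N} (2p + 1 - N) k_p`, a pairing of the sequence `k` with
strictly increasing weights. The variables of `u_i` and `u_j` sit at the positions
`i < j < i + q < j + q < ⋯` of `k`, and the degree condition makes their numbers differ by at most
one; so along these positions `k` reads the interleaving of the sorted variable lists of `u_i` and
`u_j` before the sorting step and the sorted variable list of `u_i u_j` after it, while all other
positions are unchanged. By the strict rearrangement inequality the sorted list gives the strictly
larger weighted sum unless the two lists coincide, and they coincide exactly when `(u_i, u_j)` is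
sorted.
-/

theorem List.getD_interleave {α : Type*} (d : α) : ∀ {l₁ l₂ : List α},
    l₂.length ≤ l₁.length → l₁.length ≤ l₂.length + 1 → ∀ m : ℕ,
    (l₁.interleave l₂).getD m d = if m % 2 = 0 then l₁.getD (m / 2) d else l₂.getD (m / 2) d
  | [], _, h₁, _, _ => by simp_all
  | _ :: _, _, _, _, 0 => by simp
  | _ :: _, _, h₁, h₂, m + 1 => by
    simp only [List.length_cons] at h₁ h₂
    rw [List.cons_interleave, List.getD_cons_succ,
      List.getD_interleave d (by omega) (by omega) m]
    rcases Nat.even_or_odd' m with ⟨k, rfl | rfl⟩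
    · simp [show (2 * k + 1) / 2 = k by omega]
    · simp [show (2 * k + 1 + 1) / 2 = k + 1 by omega, show (2 * k + 1) / 2 = k by omega,
        Nat.add_mod]
termination_by l₁ l₂ => l₁.length + l₂.length

theorem altSplit_interleave {α : Type*} : ∀ {l₁ l₂ : List α},
    l₂.length ≤ l₁.length → l₁.length ≤ l₂.length + 1 → altSplit (l₁.interleave l₂) = (l₁, l₂)
  | [], _, h₁, _ => by simp_all [altSplit]
  | _ :: _, _, h₁, h₂ => by
    simp only [List.length_cons] at h₁ h₂
    rw [List.cons_interleave, altSplit, altSplit_interleave (by omega) (by omega)]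
termination_by l₁ l₂ => l₁.length + l₂.length

theorem interleave_altSplit {α : Type*} :
    ∀ l : List α, (altSplit l).1.interleave (altSplit l).2 = l
  | [] => by simp [altSplit]
  | a :: l => by rw [altSplit, List.cons_interleave, interleave_altSplit l]

theorem length_altSplit {α : Type*} : ∀ l : List α,
    (altSplit l).1.length = (l.length + 1) / 2 ∧ (altSplit l).2.length = l.length / 2
  | [] => by simp [altSplit]
  | a :: l => by simp [altSplit, length_altSplit l]; omega

theorem altSplit_sublist {α : Type*} :
    ∀ l : List α, List.Sublist (altSplit l).1 l ∧ List.Sublist (altSplit l).2 l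
  | [] => by simp [altSplit]
  | a :: l => ⟨(altSplit_sublist l).2.cons_cons a, (altSplit_sublist l).1.cons a⟩

theorem Finset.sum_range_sum_range_ite_lt_sub {R : Type*} [CommRing R] (N : ℕ) (k : ℕ → R) :
    ∑ p ∈ range N, ∑ p' ∈ range N, (if p < p' then k p' - k p else 0) =
      ∑ p ∈ range N, (2 * p + 1 - N : R) * k p := by
  induction N with
  | zero => simp
  | succ n ih =>
    have hlast : ∑ p' ∈ range (n + 1), (if n < p' then k p' - k n else 0) = 0 :=
      sum_eq_zero fun p' hp' => if_neg (by simp at hp'; omega)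
    rw [sum_range_succ _ n, hlast, add_zero,
      sum_congr rfl fun p hp => by rw [sum_range_succ, if_pos (mem_range.mp hp)],
      sum_add_distrib, ih, ← sum_add_distrib, sum_range_succ]
    push_cast
    rw [sum_congr rfl fun (p : ℕ) _ => show (2 * p + 1 - n : R) * k p + (k n - k p) =
      (2 * p + 1 - (n + 1) : R) * k p + k n by ring, sum_add_distrib]
    simp; ring

section Rearrangement

variable {R : Type*} [CommRing R] [LinearOrder R] [IsStrictOrderedRing R]

theorem StrictMono.sum_mul_comp_perm_lt_sum_mul {t : ℕ} {c w : Fin t → R} (hc : StrictMono c)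
    (hw : Monotone w) (σ : Equiv.Perm (Fin t)) (hσ : w ∘ σ ≠ w) :
    ∑ m, c m * w (σ m) < ∑ m, c m * w m := by
  refine ((hc.monotone.monovary hw).sum_smul_comp_perm_lt_sum_smul_iff).mpr fun h => hσ ?_
  simpa using Tuple.unique_monotone (τ := 1) (hc.trans_monovary h.symm) (by simpa using hw)

theorem StrictMono.sum_range_mul_getD_lt_of_perm {c : ℕ → R} (hc : StrictMono c) {V W : List R}
    (hVW : V.Perm W) (hW : W.SortedLE) (hne : V ≠ W) :
    ∑ m ∈ Finset.range W.length, c m * V.getD m 0 <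
      ∑ m ∈ Finset.range W.length, c m * W.getD m 0 := by
  have hofFn : ∀ L : List R, L.length = W.length →
      List.ofFn (fun m : Fin W.length => L.getD m 0) = L := fun L hL =>
    List.ext_getElem (by simp [hL]) fun _ _ _ => by simp [*]
  set v : Fin W.length → R := fun m => V.getD m 0
  set w : Fin W.length → R := fun m => W.getD m 0
  set σ := Tuple.sort v
  have hvσ : v ∘ σ = w := List.ofFn_injective <| List.Perm.eq_of_sortedLE
    (List.sortedLE_ofFn_iff.2 (Tuple.monotone_sort v)) (by rwa [hofFn W rfl])
    ((σ.ofFn_comp_perm v).trans (by rwa [hofFn V hVW.length_eq, hofFn W rfl]))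
  have hv : w ∘ σ.symm = v := by rw [← hvσ]; ext; simp
  rw [← Fin.sum_univ_eq_sum_range, ← Fin.sum_univ_eq_sum_range]
  change ∑ m : Fin W.length, c m * v m < ∑ m : Fin W.length, c m * w m
  rw [← hv]
  refine (hc.comp Fin.val_strictMono).sum_mul_comp_perm_lt_sum_mul
    (fun a b hab => by simpa [w] using List.sortedLE_iff_monotone_get.1 hW hab) σ.symm ?_
  rw [hv]
  exact fun h => hne <|
    (hofFn V hVW.length_eq).symm.trans ((congrArg List.ofFn h).trans (hofFn W rfl))

end Rearrangement

section SortPair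

variable {α : Type*} [LinearOrder α]

theorem Multiset.sort_coe_of_pairwise {l : List α} (hl : l.Pairwise (· ≤ ·)) :
    (l : Multiset α).sort (· ≤ ·) = l :=
  List.Perm.eq_of_pairwise' (pairwise_sort _ _) hl (coe_eq_coe.mp (sort_eq _ _))

theorem Multiset.interleave_sort_perm_sort_add (u v : Multiset α) :
    ((u.sort (· ≤ ·)).interleave (v.sort (· ≤ ·))).Perm ((u + v).sort (· ≤ ·)) :=
  List.interleave_perm_append.trans (coe_eq_coe.1 (by simp only [← coe_add, sort_eq]))

theorem sort_sortPair (u v : Multiset α) :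
    (sortPair u v).1.sort (· ≤ ·) = (altSplit ((u + v).sort (· ≤ ·))).1 ∧
    (sortPair u v).2.sort (· ≤ ·) = (altSplit ((u + v).sort (· ≤ ·))).2 :=
  ⟨Multiset.sort_coe_of_pairwise ((Multiset.pairwise_sort _ _).sublist (altSplit_sublist _).1),
   Multiset.sort_coe_of_pairwise ((Multiset.pairwise_sort _ _).sublist (altSplit_sublist _).2)⟩

theorem isSortedPair_of_interleave_eq {u v : Multiset α}
    (h₁ : Multiset.card v ≤ Multiset.card u) (h₂ : Multiset.card u ≤ Multiset.card v + 1)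
    (h : (u.sort (· ≤ ·)).interleave (v.sort (· ≤ ·)) = (u + v).sort (· ≤ ·)) :
    IsSortedPair u v := by
  rw [IsSortedPair, sortPair, ← h, altSplit_interleave (by simpa) (by simpa)]
  simp

end SortPair

/-- The positions `i, j, i + q, j + q, i + 2q, …` of the sequence `k` carrying `u_i` and `u_j`. -/
def pairIndex (q i j m : ℕ) : ℕ := (if m % 2 = 0 then i else j) + m / 2 * q

theorem pairIndex_two_mul (q i j a : ℕ) : pairIndex q i j (2 * a) = i + a * q := by
  simp [pairIndex]

theorem pairIndex_two_mul_add_one (q i j a : ℕ) : pairIndex q i j (2 * a + 1) = j + a * q := by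
  simp [pairIndex, Nat.add_mod, show (2 * a + 1) / 2 = a by omega]

theorem pairIndex_strictMono {q i j : ℕ} (hij : i < j) (hj : j < q) :
    StrictMono (pairIndex q i j) := by
  refine strictMono_nat_of_lt_succ fun m => ?_
  rcases Nat.even_or_odd' m with ⟨a, rfl | rfl⟩
  · rw [pairIndex_two_mul, pairIndex_two_mul_add_one]
    omega
  · rw [pairIndex_two_mul_add_one, show 2 * a + 1 + 1 = 2 * (a + 1) by ring, pairIndex_two_mul,
      add_mul]
    omega

theorem entry_add_mul {q : ℕ} (v : Fin q → Multiset ℕ) (k : Fin q) (a : ℕ) :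
    entry v (k + a * q) = ((v k).sort (· ≤ ·)).getD a 0 := by
  have hq : 0 < q := k.pos
  have hk : ⟨(k + a * q) % q, Nat.mod_lt _ hq⟩ = k := by ext; simp [Nat.mod_eq_of_lt k.isLt]
  simp only [entry, dif_pos hq, hk, Nat.add_mul_div_right _ _ hq, Nat.div_eq_of_lt k.isLt,
    zero_add]

theorem entry_pairIndex {q : ℕ} (v : Fin q → Multiset ℕ) (i j : Fin q)
    (h₁ : Multiset.card (v j) ≤ Multiset.card (v i))
    (h₂ : Multiset.card (v i) ≤ Multiset.card (v j) + 1) (m : ℕ) :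
    entry v (pairIndex q i j m) =
      (((v i).sort (· ≤ ·)).interleave ((v j).sort (· ≤ ·))).getD m 0 := by
  rw [List.getD_interleave _ (by simpa) (by simpa)]
  split_ifs with hm <;> simp only [pairIndex, hm, if_true, if_false] <;>
    exact entry_add_mul v _ _

theorem entry_pairIndex_of_sortPair {q : ℕ} {u u' : Fin q → Multiset ℕ} {i j : Fin q}
    (hui : u' i = (sortPair (u i) (u j)).1) (huj : u' j = (sortPair (u i) (u j)).2) (m : ℕ) :
    entry u' (pairIndex q i j m) = ((u i + u j).sort (· ≤ ·)).getD m 0 := by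
  obtain ⟨hsi, hsj⟩ := sort_sortPair (u i) (u j)
  rw [← hui] at hsi
  rw [← huj] at hsj
  have hlen := length_altSplit ((u i + u j).sort (· ≤ ·))
  have hci := Multiset.length_sort (s := u' i) (· ≤ ·)
  have hcj := Multiset.length_sort (s := u' j) (· ≤ ·)
  rw [hsi, hlen.1, Multiset.length_sort, Multiset.card_add] at hci
  rw [hsj, hlen.2, Multiset.length_sort, Multiset.card_add] at hcj
  rw [entry_pairIndex u' i j (by omega) (by omega), hsi, hsj, interleave_altSplit]

theorem card_le_card_and_card_le_card_add_one {q d r : ℕ} {u : Fin q → Multiset ℕ}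
    (hdeg : ∀ k : Fin q, Multiset.card (u k) = if (k : ℕ) < r then d + 1 else d)
    {i j : Fin q} (hij : i < j) :
    Multiset.card (u j) ≤ Multiset.card (u i) ∧
      Multiset.card (u i) ≤ Multiset.card (u j) + 1 := by
  rw [hdeg i, hdeg j]
  have : (i : ℕ) < j := hij
  split_ifs <;> omega

theorem add_mul_lt_iff_lt_card {q d r : ℕ} {u : Fin q → Multiset ℕ}
    (hdeg : ∀ k : Fin q, Multiset.card (u k) = if (k : ℕ) < r then d + 1 else d) (hr : r ≤ q)
    (k : Fin q) (a : ℕ) :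
    k + a * q < q * d + r ↔ a < Multiset.card (u k) := by
  have hk := k.isLt
  rw [hdeg k]
  split_ifs with hkr
  · constructor
    · intro h; by_contra! ha; nlinarith
    · intro ha; nlinarith
  · constructor
    · intro h; by_contra! ha; nlinarith
    · intro ha; obtain ⟨d, rfl⟩ : ∃ d', d = d' + 1 := ⟨d - 1, by omega⟩; nlinarith

theorem gval_sub_gval_eq_sum_pairIndex {q d r : ℕ} (hr : r ≤ q) {u u' : Fin q → Multiset ℕ}
    (hdeg : ∀ k : Fin q, Multiset.card (u k) = if (k : ℕ) < r then d + 1 else d) {i j : Fin q}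
    (hij : i < j) (hother : ∀ k : Fin q, k ≠ i → k ≠ j → u' k = u k) :
    gval q d r u' - gval q d r u =
      ∑ m ∈ Finset.range (Multiset.card (u i) + Multiset.card (u j)),
        (2 * pairIndex q i j m + 1 - (q * d + r) : ℤ) *
          (entry u' (pairIndex q i j m) - entry u (pairIndex q i j m)) := by
  have hq : 0 < q := i.pos
  obtain ⟨h₁, h₂⟩ := card_le_card_and_card_le_card_add_one hdeg hij
  have hlt := add_mul_lt_iff_lt_card hdeg hr
  simp only [gval, Finset.sum_range_sum_range_ite_lt_sub, ← Finset.sum_sub_distrib, ← mul_sub]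
  symm
  refine Finset.sum_of_injOn _ (pairIndex_strictMono hij j.isLt).injective.injOn ?_ ?_
    fun _ _ => by push_cast; rfl
  · intro m hm
    simp only [Finset.coe_range, Set.mem_Iio] at hm ⊢
    rcases Nat.even_or_odd' m with ⟨a, rfl | rfl⟩
    · rw [pairIndex_two_mul, hlt]
      omega
    · rw [pairIndex_two_mul_add_one, hlt]
      omega
  · intro p hp hpi
    set k : Fin q := ⟨p % q, Nat.mod_lt p hq⟩
    have hpk : p = k + p / q * q := (Nat.mod_add_div' p q).symm
    have hlt_k : p / q < Multiset.card (u k) := by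
      rw [← hlt, ← hpk]; simpa using hp
    suffices entry u' p = entry u p by simp [this]
    by_cases hki : k = i
    · refine absurd ⟨2 * (p / q), ?_, ?_⟩ hpi
      · simp only [Finset.coe_range, Set.mem_Iio]; rw [hki] at hlt_k; omega
      · rw [pairIndex_two_mul, ← hki, ← hpk]
    by_cases hkj : k = j
    · refine absurd ⟨2 * (p / q) + 1, ?_, ?_⟩ hpi
      · simp only [Finset.coe_range, Set.mem_Iio]; rw [hkj] at hlt_k; omega
      · rw [pairIndex_two_mul_add_one, ← hkj, ← hpk]
    rw [hpk, entry_add_mul, entry_add_mul, hother k hki hkj]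

/-- for a `q`-tuple `u` whose first `r` entries have degree `d+1` and whose
remaining entries have degree `d`, if `i < j`, `(u_i, u_j)` is an unsorted pair and `u'` is
obtained from `u` by replacing `(u_i, u_j)` with `sort(u_i, u_j)`, then `g(u) < g(u')`. -/
theorem gval_lt_of_single_sorting (q d r : ℕ) (hr : r < q) (u : Fin q → Multiset ℕ)
    (hdeg : ∀ i : Fin q, Multiset.card (u i) = if (i : ℕ) < r then d + 1 else d)
    (i j : Fin q) (hij : i < j) (huns : ¬ IsSortedPair (u i) (u j))
    (u' : Fin q → Multiset ℕ)
    (hui : u' i = (sortPair (u i) (u j)).1)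
    (huj : u' j = (sortPair (u i) (u j)).2)
    (hother : ∀ k : Fin q, k ≠ i → k ≠ j → u' k = u k) :
    gval q d r u < gval q d r u' := by
  obtain ⟨h₁, h₂⟩ := card_le_card_and_card_le_card_add_one hdeg hij
  set V := ((u i).sort (· ≤ ·)).interleave ((u j).sort (· ≤ ·))
  set W := (u i + u j).sort (· ≤ ·)
  have hc : StrictMono fun m => (2 * pairIndex q i j m + 1 - (q * d + r) : ℤ) := by
    intro a b hab
    have : (pairIndex q i j a : ℤ) < pairIndex q i j b := by
      exact_mod_cast pairIndex_strictMono hij j.isLt hab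
    dsimp only; linarith
  have hW : (W.map ((↑) : ℕ → ℤ)).SortedLE :=
    ((Multiset.pairwise_sort _ _).map _ fun _ _ h => Int.ofNat_le.2 h).sortedLE
  have hne : V.map ((↑) : ℕ → ℤ) ≠ W.map (↑) := fun h =>
    huns (isSortedPair_of_interleave_eq h₁ h₂ (List.map_injective_iff.2 Nat.cast_injective h))
  have hrearr := hc.sum_range_mul_getD_lt_of_perm
    ((Multiset.interleave_sort_perm_sort_add _ _).map _) hW hne
  have hcast : ∀ (L : List ℕ) m, ((L.getD m 0 : ℕ) : ℤ) = (L.map (↑)).getD m 0 :=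
    fun L _ => (List.getD_map L 0 _).symm
  rw [List.length_map, Multiset.length_sort, Multiset.card_add] at hrearr
  rw [← sub_pos, gval_sub_gval_eq_sum_pairIndex hr.le hdeg hij hother]
  simpa only [entry_pairIndex u i j h₁ h₂, entry_pairIndex_of_sortPair hui huj, hcast,
    mul_sub, Finset.sum_sub_distrib, sub_pos] using hrearr
end

section
/- Let G be a finite simple graph with clique partition π = (V_1,…,V_m) and let r_1,…,r_m be positive integers, and let G' = G^π(r_1,…,r_m) be the associated clique multi-whiskered graph. A subset C' of the vertex set of G' is a minimal vertex cover of G' if and only if there exists a vertex cover C of G (not necessarily minimal) such that C' = C ∪ ⋃_{i : V_i ⊄ C} {z_1^{(i)},…,z_{r_i}^{(i)}}. -/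
/-- `C` is a vertex cover of the graph `G`: it meets every edge. -/
def IsVertexCover {W : Type*} (G : SimpleGraph W) (C : Finset W) : Prop :=
  ∀ a b : W, G.Adj a b → a ∈ C ∨ b ∈ C

/-- `C` is a minimal vertex cover of `G`: it is a vertex cover and no proper subset of `C`
is a vertex cover. -/
def IsMinVertexCover {W : Type*} (G : SimpleGraph W) (C : Finset W) : Prop :=
  IsVertexCover G C ∧ ∀ D : Finset W, D ⊆ C → IsVertexCover G D → D = C

/-- The clique multi-whiskered graph `G^π(r_1,…,r_m)`: to each part `V_i = π⁻¹(i)` of the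
clique partition `π` we attach `r i` new whisker vertices `z_1^{(i)}, …, z_{r_i}^{(i)}`
(encoded as `Sum.inr ⟨i, k⟩`), each joined to every vertex of `V_i`. -/
def cliqueWhisker {V : Type*} {m : ℕ} (G : SimpleGraph V) (π : V → Fin m)
    (r : Fin m → ℕ) : SimpleGraph (V ⊕ (Σ i : Fin m, Fin (r i))) :=
  SimpleGraph.fromRel (fun a b =>
    match a, b with
    | Sum.inl v, Sum.inl w => G.Adj v w
    | Sum.inl v, Sum.inr p => π v = p.1
    | Sum.inr _, _ => False)

/-- The minimal vertex cover of `G^π(r_1,…,r_m)` attached to a vertex cover `C` of `G`: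
`C' = C ∪ ⋃_{i : V_i ⊄ C} {z_1^{(i)}, …, z_{r_i}^{(i)}}`. -/
def whiskCover {V : Type*} [Fintype V] [DecidableEq V] {m : ℕ} (π : V → Fin m)
    (r : Fin m → ℕ) (C : Finset V) : Finset (V ⊕ (Σ i : Fin m, Fin (r i))) :=
  C.image Sum.inl ∪
    (Finset.univ.filter (fun p : Σ i : Fin m, Fin (r i) =>
      ¬ (Finset.univ.filter (fun v => π v = p.1) ⊆ C))).image Sum.inr

/-
A vertex cover is minimal exactly when each of its vertices has a neighbour outside it. A whisker
`z_k^{(i)}` lies in a minimal cover `C'` precisely when some vertex of `V_i` is missing from `C'`,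
which forces `C' = whiskCover (C' ∩ V(G))`. Conversely, a vertex `x ∈ C` of `whiskCover C` has
an uncovered neighbour: another vertex of its clique `V_i` if `V_i ⊄ C`, and otherwise one of
the `r_i > 0` whiskers of `V_i`.
-/

theorem IsVertexCover.erase {W : Type*} [DecidableEq W] {G : SimpleGraph W} {C : Finset W}
    (hC : IsVertexCover G C) {x : W} (hx : ∀ y, G.Adj x y → y ∈ C) :
    IsVertexCover G (C.erase x) := by
  intro a b hab
  by_cases hax : a = x
  · subst hax
    exact Or.inr (Finset.mem_erase.2 ⟨hab.ne.symm, hx b hab⟩)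
  by_cases hbx : b = x
  · subst hbx
    exact Or.inl (Finset.mem_erase.2 ⟨hab.ne, hx a hab.symm⟩)
  exact (hC a b hab).imp (Finset.mem_erase.2 ⟨hax, ·⟩) (Finset.mem_erase.2 ⟨hbx, ·⟩)

theorem isMinVertexCover_iff {W : Type*} [DecidableEq W] {G : SimpleGraph W} {C : Finset W} :
    IsMinVertexCover G C ↔ IsVertexCover G C ∧ ∀ x ∈ C, ∃ y, G.Adj x y ∧ y ∉ C := by
  refine and_congr_right fun hC => ⟨fun hmin x hx => ?_, fun hnbr D hDC hD => ?_⟩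
  · by_contra! hall
    rw [← hmin _ (Finset.erase_subset x C) (hC.erase hall)] at hx
    exact Finset.notMem_erase x C hx
  · refine Finset.Subset.antisymm hDC fun x hx => ?_
    obtain ⟨y, hxy, hyC⟩ := hnbr x hx
    exact (hD x y hxy).resolve_right fun hyD => hyC (hDC hyD)

theorem IsVertexCover.preimage {V W : Type*} {G : SimpleGraph V} {H : SimpleGraph W}
    (f : G ↪g H) {C : Finset W} (hC : IsVertexCover H C) :
    IsVertexCover G (C.preimage f f.injective.injOn) := fun a b hab => by
  simpa only [Finset.mem_preimage] using hC (f a) (f b) (f.map_rel_iff.2 hab)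

section cliqueWhisker

variable {V : Type*} {m : ℕ} {G : SimpleGraph V} {π : V → Fin m} {r : Fin m → ℕ}

@[simp]
theorem cliqueWhisker_adj_inl_inl {v w : V} :
    (cliqueWhisker G π r).Adj (Sum.inl v) (Sum.inl w) ↔ G.Adj v w := by
  simp only [cliqueWhisker, SimpleGraph.fromRel_adj, ne_eq, Sum.inl.injEq]
  exact ⟨fun ⟨_, h⟩ => h.elim id SimpleGraph.Adj.symm, fun h => ⟨h.ne, Or.inl h⟩⟩

@[simp]
theorem cliqueWhisker_adj_inl_inr {v : V} {p : Σ i : Fin m, Fin (r i)} :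
    (cliqueWhisker G π r).Adj (Sum.inl v) (Sum.inr p) ↔ π v = p.1 := by
  simp [cliqueWhisker]

@[simp]
theorem cliqueWhisker_adj_inr_inl {v : V} {p : Σ i : Fin m, Fin (r i)} :
    (cliqueWhisker G π r).Adj (Sum.inr p) (Sum.inl v) ↔ π v = p.1 := by
  rw [SimpleGraph.adj_comm, cliqueWhisker_adj_inl_inr]

@[simp]
theorem cliqueWhisker_not_adj_inr_inr {p q : Σ i : Fin m, Fin (r i)} :
    ¬ (cliqueWhisker G π r).Adj (Sum.inr p) (Sum.inr q) := by
  simp [cliqueWhisker]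

variable (G π r) in
def cliqueWhisker.inlEmbedding : G ↪g cliqueWhisker G π r where
  toEmbedding := Function.Embedding.inl
  map_rel_iff' := cliqueWhisker_adj_inl_inl

variable [Fintype V] [DecidableEq V] {C : Finset V}

@[simp]
theorem inl_mem_whiskCover {v : V} : Sum.inl v ∈ whiskCover π r C ↔ v ∈ C := by
  simp [whiskCover]

@[simp]
theorem inr_mem_whiskCover {p : Σ i : Fin m, Fin (r i)} :
    Sum.inr p ∈ whiskCover π r C ↔ ∃ v, π v = p.1 ∧ v ∉ C := by
  simp [whiskCover, Finset.subset_iff]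

theorem inl_mem_or_inr_mem_whiskCover {v : V} {p : Σ i : Fin m, Fin (r i)} (hv : π v = p.1) :
    Sum.inl v ∈ whiskCover π r C ∨ Sum.inr p ∈ whiskCover π r C := by
  by_cases hvC : v ∈ C
  · exact Or.inl (inl_mem_whiskCover.2 hvC)
  · exact Or.inr (inr_mem_whiskCover.2 ⟨v, hv, hvC⟩)

theorem isVertexCover_whiskCover (hC : IsVertexCover G C) :
    IsVertexCover (cliqueWhisker G π r) (whiskCover π r C) := by
  rintro (v | p) (w | q) hadj
  · simpa using hC v w (cliqueWhisker_adj_inl_inl.1 hadj)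
  · exact inl_mem_or_inr_mem_whiskCover (cliqueWhisker_adj_inl_inr.1 hadj)
  · exact (inl_mem_or_inr_mem_whiskCover (cliqueWhisker_adj_inr_inl.1 hadj)).symm
  · exact (cliqueWhisker_not_adj_inr_inr hadj).elim

theorem exists_adj_notMem_whiskCover (hclique : ∀ v w : V, π v = π w → v ≠ w → G.Adj v w)
    (hr : ∀ i, 0 < r i) {x : V ⊕ (Σ i : Fin m, Fin (r i))} (hx : x ∈ whiskCover π r C) :
    ∃ y, (cliqueWhisker G π r).Adj x y ∧ y ∉ whiskCover π r C := by
  rcases x with v | p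
  · have hvC : v ∈ C := inl_mem_whiskCover.1 hx
    by_cases hblock : ∃ w, π w = π v ∧ w ∉ C
    · obtain ⟨w, hw, hwC⟩ := hblock
      have hvw : v ≠ w := fun h => hwC (h ▸ hvC)
      exact ⟨Sum.inl w, cliqueWhisker_adj_inl_inl.2 (hclique v w hw.symm hvw),
        inl_mem_whiskCover.not.2 hwC⟩
    · exact ⟨Sum.inr ⟨π v, ⟨0, hr (π v)⟩⟩, cliqueWhisker_adj_inl_inr.2 rfl,
        inr_mem_whiskCover.not.2 hblock⟩
  · obtain ⟨v, hv, hvC⟩ := inr_mem_whiskCover.1 hx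
    exact ⟨Sum.inl v, cliqueWhisker_adj_inr_inl.2 hv, inl_mem_whiskCover.not.2 hvC⟩

theorem eq_whiskCover_preimage_inl {C' : Finset (V ⊕ (Σ i : Fin m, Fin (r i)))}
    (hcov : IsVertexCover (cliqueWhisker G π r) C')
    (hnbr : ∀ x ∈ C', ∃ y, (cliqueWhisker G π r).Adj x y ∧ y ∉ C') :
    C' = whiskCover π r (C'.preimage Sum.inl Sum.inl_injective.injOn) := by
  ext (v | p)
  · simp
  · simp only [inr_mem_whiskCover, Finset.mem_preimage]
    constructor
    · intro hp
      obtain ⟨(v | q), hadj, hy⟩ := hnbr _ hp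
      · exact ⟨v, cliqueWhisker_adj_inr_inl.1 hadj, hy⟩
      · exact (cliqueWhisker_not_adj_inr_inr hadj).elim
    · rintro ⟨v, hv, hvC'⟩
      exact (hcov _ _ (cliqueWhisker_adj_inl_inr.2 hv)).resolve_left hvC'

end cliqueWhisker

/-- a subset `C'` of the vertex set of the clique multi-whiskered graph
`G' = G^π(r_1,…,r_m)` is a minimal vertex cover of `G'` if and only if
`C' = C ∪ ⋃_{i : V_i ⊄ C} {z_1^{(i)},…,z_{r_i}^{(i)}}` for some (not necessarily minimal)
vertex cover `C` of `G`. -/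
theorem minimal_vertex_covers_of_cliqueWhisker
    {V : Type*} [Fintype V] [DecidableEq V] {m : ℕ}
    (G : SimpleGraph V) (π : V → Fin m)
    (hclique : ∀ v w : V, π v = π w → v ≠ w → G.Adj v w)
    (r : Fin m → ℕ) (hr : ∀ i, 0 < r i)
    (C' : Finset (V ⊕ (Σ i : Fin m, Fin (r i)))) :
    IsMinVertexCover (cliqueWhisker G π r) C' ↔
      ∃ C : Finset V, IsVertexCover G C ∧ C' = whiskCover π r C := by
  rw [isMinVertexCover_iff]
  constructor
  · rintro ⟨hcov, hnbr⟩
    exact ⟨_, hcov.preimage (cliqueWhisker.inlEmbedding G π r),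
      eq_whiskCover_preimage_inl hcov hnbr⟩
  · rintro ⟨C, hC, rfl⟩
    exact ⟨isVertexCover_whiskCover hC, fun _ => exists_adj_notMem_whiskCover hclique hr⟩
end
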